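/- arXiv:2009.11504 — 2 statements merged into one kernel-verified Lean document; each statement's English description precedes it below -/
import Mathlib

section
/- Let V, Q be Hilbert spaces, a : V×V → ℝ and b : V×Q → ℝ continuous bilinear forms with a coercive on the kernel V₀ = {v ∈ V : b(v,q) = 0 ∀q}, and b satisfying the inf-sup (LBB) condition sup_{v∈V} b(v,q)/‖v‖_V ≥ β‖q‖_Q for all q ∈ Q with β > 0. Then for any continuous linear functionals f ∈ V*, g ∈ Q*, the saddle-point problem a(u,v) + b(v,p) = f(v) ∀v, b(u,q) = g(q) ∀q has a unique solution (u,p) ∈ V × Q. -/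
/-!
Let `T : Q → V` send `q` to the Riesz representative of `b(·, q)`. The inf-sup condition says
`β‖q‖ ≤ ‖T q‖`, so `(q, q') ↦ ⟪T q, T q'⟫` is coercive on `Q`, and Lax–Milgram for this form shows
that `u ↦ b(u, ·)` maps `V` onto `Q*` and that every functional on `V` vanishing on `V₀ = ker b`
is of the form `b(·, p)`. To solve the system, take `u_g` with `b(u_g, ·) = g`, correct it by the
Lax–Milgram solution `u₀ ∈ V₀` of `a(u₀, z) = f z - a(u_g, z)` on `V₀`, and represent the
functional `f - a(u_g + u₀, ·)`, which vanishes on `V₀`, as `b(·, p)`. For uniqueness, a solution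
of the homogeneous system has `u ∈ V₀` and `a(u, u) = -b(u, p) = 0`, so `u = 0` by coercivity on
the kernel, and then `b(·, p) = 0` forces `p = 0` by the inf-sup condition.
-/

open InnerProductSpace RealInnerProductSpace

theorem IsCoercive.exists_forall_apply_eq {E : Type*} [NormedAddCommGroup E]
    [InnerProductSpace ℝ E] [CompleteSpace E] {B : E →L[ℝ] E →L[ℝ] ℝ} (hB : IsCoercive B)
    (φ : StrongDual ℝ E) : ∃ x, ∀ y, B x y = φ y := by
  refine ⟨hB.continuousLinearEquivOfBilin.symm ((toDual ℝ E).symm φ), fun y => ?_⟩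
  rw [← hB.continuousLinearEquivOfBilin_apply, ContinuousLinearEquiv.apply_symm_apply,
    toDual_symm_apply]

theorem ContinuousLinearMap.iSup_apply_div_norm_le_opNorm {E : Type*} [SeminormedAddCommGroup E]
    [NormedSpace ℝ E] (ℓ : StrongDual ℝ E) : ⨆ v : E, ℓ v / ‖v‖ ≤ ‖ℓ‖ :=
  ciSup_le fun v => div_le_of_le_mul₀ (norm_nonneg v) (norm_nonneg ℓ)
    ((le_abs_self _).trans (ℓ.le_opNorm v))

section BoundedBelow

variable {V Q : Type*} [NormedAddCommGroup V] [InnerProductSpace ℝ V]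
  [NormedAddCommGroup Q] [InnerProductSpace ℝ Q] {T : Q →L[ℝ] V} {β : ℝ}

theorem isCoercive_innerSL_bilinearComp_of_bounded_below (hβ : 0 < β)
    (hT : ∀ q, β * ‖q‖ ≤ ‖T q‖) : IsCoercive ((innerSL ℝ).bilinearComp T T) := by
  refine ⟨β * β, mul_pos hβ hβ, fun q => ?_⟩
  calc β * β * ‖q‖ * ‖q‖ = (β * ‖q‖) * (β * ‖q‖) := by ring
    _ ≤ ‖T q‖ * ‖T q‖ := mul_le_mul (hT q) (hT q) (by positivity) (norm_nonneg _)
    _ = ⟪T q, T q⟫ := (real_inner_self_eq_norm_mul_norm _).symm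

theorem exists_forall_inner_apply_eq_of_bounded_below [CompleteSpace Q] (hβ : 0 < β)
    (hT : ∀ q, β * ‖q‖ ≤ ‖T q‖) (ψ : StrongDual ℝ Q) : ∃ r, ∀ q, ⟪T r, T q⟫ = ψ q :=
  (isCoercive_innerSL_bilinearComp_of_bounded_below hβ hT).exists_forall_apply_eq ψ

end BoundedBelow

section InfSup

variable {V Q : Type*} [NormedAddCommGroup V] [InnerProductSpace ℝ V]
  [NormedAddCommGroup Q] [InnerProductSpace ℝ Q] (B : V →L[ℝ] Q →L[ℝ] ℝ)

theorem mem_ker_iff_forall_apply_eq_zero {v : V} :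
    v ∈ LinearMap.ker (B : V →ₗ[ℝ] Q →L[ℝ] ℝ) ↔ ∀ q, B v q = 0 := by
  simp [ContinuousLinearMap.ext_iff]

theorem eq_zero_of_forall_apply_eq_zero_of_inf_sup {β : ℝ} (hβ : 0 < β)
    (hB : ∀ q, β * ‖q‖ ≤ ‖B.flip q‖) {p : Q} (hp : ∀ v, B v p = 0) : p = 0 := by
  have h := hB p
  rw [show B.flip p = 0 from ContinuousLinearMap.ext hp, norm_zero, ← mul_zero β] at h
  exact norm_le_zero_iff.1 (le_of_mul_le_mul_left h hβ)

variable [CompleteSpace V]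

noncomputable def rieszFlip : Q →L[ℝ] V :=
  LinearMap.mkContinuous
    { toFun := fun q => (toDual ℝ V).symm (B.flip q)
      map_add' := by simp
      map_smul' := by simp }
    ‖B.flip‖ fun q => by simpa using B.flip.le_opNorm q

theorem inner_rieszFlip (q : Q) (v : V) : ⟪rieszFlip B q, v⟫ = B v q :=
  toDual_symm_apply

theorem norm_rieszFlip (q : Q) : ‖rieszFlip B q‖ = ‖B.flip q‖ :=
  (toDual ℝ V).symm.norm_map _

variable {B} {β : ℝ} [CompleteSpace Q]

theorem exists_forall_apply_eq_of_inf_sup (hβ : 0 < β) (hB : ∀ q, β * ‖q‖ ≤ ‖B.flip q‖)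
    (g : StrongDual ℝ Q) : ∃ u, ∀ q, B u q = g q := by
  obtain ⟨r, hr⟩ := exists_forall_inner_apply_eq_of_bounded_below hβ
    (fun q => (hB q).trans_eq (norm_rieszFlip B q).symm) g
  exact ⟨rieszFlip B r, fun q => by rw [← inner_rieszFlip, real_inner_comm, hr]⟩

theorem exists_forall_apply_flip_eq_of_inf_sup (hβ : 0 < β) (hB : ∀ q, β * ‖q‖ ≤ ‖B.flip q‖)
    (φ : StrongDual ℝ V) (hφ : ∀ v ∈ LinearMap.ker (B : V →ₗ[ℝ] Q →L[ℝ] ℝ), φ v = 0) :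
    ∃ p, ∀ v, B v p = φ v := by
  set w := (toDual ℝ V).symm φ
  -- With `T = rieszFlip B`, `T p` is the orthogonal projection of `w` onto the range of `T`:
  -- as `w ⊥ ker B` and `(range T)ᗮ = ker B`, `T p - w` lies in `ker B` and is orthogonal to it.
  obtain ⟨p, hp⟩ := exists_forall_inner_apply_eq_of_bounded_below hβ
    (fun q => (hB q).trans_eq (norm_rieszFlip B q).symm) ((innerSL ℝ w).comp (rieszFlip B))
  have hker : rieszFlip B p - w ∈ LinearMap.ker (B : V →ₗ[ℝ] Q →L[ℝ] ℝ) := by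
    rw [mem_ker_iff_forall_apply_eq_zero]
    intro q
    rw [← inner_rieszFlip, inner_sub_right, real_inner_comm (rieszFlip B p), hp,
      real_inner_comm w]
    exact sub_self _
  have hperp : ⟪rieszFlip B p - w, rieszFlip B p - w⟫ = 0 := by
    rw [inner_sub_left, inner_rieszFlip, toDual_symm_apply,
      (mem_ker_iff_forall_apply_eq_zero B).1 hker, hφ _ hker, sub_self]
  have : rieszFlip B p = w := sub_eq_zero.1 (inner_self_eq_zero.1 hperp)
  exact ⟨p, fun v => by rw [← inner_rieszFlip, this, toDual_symm_apply]⟩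

end InfSup

section SaddlePoint

variable {V Q : Type*} [NormedAddCommGroup V] [InnerProductSpace ℝ V]
  [NormedAddCommGroup Q] [InnerProductSpace ℝ Q]
  {A : V →L[ℝ] V →L[ℝ] ℝ} {B : V →L[ℝ] Q →L[ℝ] ℝ} {α β : ℝ}

theorem Submodule.exists_mem_forall_mem_apply_eq (K : Submodule ℝ V) [CompleteSpace K]
    (hα : 0 < α) (hA : ∀ v ∈ K, α * ‖v‖ ^ 2 ≤ A v v) (φ : StrongDual ℝ V) :
    ∃ u ∈ K, ∀ z ∈ K, A u z = φ z := by
  have hAK : IsCoercive (A.bilinearComp K.subtypeL K.subtypeL) :=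
    ⟨α, hα, fun v => by simpa [sq, mul_assoc] using hA v v.2⟩
  obtain ⟨u, hu⟩ := hAK.exists_forall_apply_eq (φ.comp K.subtypeL)
  exact ⟨u, u.2, fun z hz => hu ⟨z, hz⟩⟩

theorem saddlePoint_eq_zero (hα : 0 < α) (hA : ∀ v, (∀ q, B v q = 0) → α * ‖v‖ ^ 2 ≤ A v v)
    (hβ : 0 < β) (hB : ∀ q, β * ‖q‖ ≤ ‖B.flip q‖) {u : V} {p : Q}
    (h₁ : ∀ v, A u v + B v p = 0) (h₂ : ∀ q, B u q = 0) : u = 0 ∧ p = 0 := by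
  have hu : u = 0 := by
    have hAu : A u u = 0 := by linarith [h₁ u, h₂ p]
    have h : α * ‖u‖ ^ 2 ≤ α * 0 := by simpa [hAu] using hA u h₂
    simpa using le_of_mul_le_mul_left h hα
  subst hu
  exact ⟨rfl, eq_zero_of_forall_apply_eq_zero_of_inf_sup B hβ hB fun v => by simpa using h₁ v⟩

variable [CompleteSpace V] [CompleteSpace Q]

theorem exists_saddlePoint (hα : 0 < α) (hA : ∀ v, (∀ q, B v q = 0) → α * ‖v‖ ^ 2 ≤ A v v)
    (hβ : 0 < β) (hB : ∀ q, β * ‖q‖ ≤ ‖B.flip q‖) (f : StrongDual ℝ V) (g : StrongDual ℝ Q) :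
    ∃ u p, (∀ v, A u v + B v p = f v) ∧ ∀ q, B u q = g q := by
  set K := LinearMap.ker (B : V →ₗ[ℝ] Q →L[ℝ] ℝ)
  have : CompleteSpace K := B.isClosed_ker.completeSpace_coe
  obtain ⟨ug, hug⟩ := exists_forall_apply_eq_of_inf_sup hβ hB g
  obtain ⟨u₀, hu₀K, hu₀⟩ := K.exists_mem_forall_mem_apply_eq hα
    (fun v hv => hA v ((mem_ker_iff_forall_apply_eq_zero B).1 hv)) (f - A ug)
  obtain ⟨p, hp⟩ := exists_forall_apply_flip_eq_of_inf_sup hβ hB (f - A (ug + u₀))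
    fun z hz => by simp [hu₀ z hz]
  refine ⟨ug + u₀, p, fun v => by simp [hp], fun q => ?_⟩
  simp [hug, (mem_ker_iff_forall_apply_eq_zero B).1 hu₀K]

theorem existsUnique_saddlePoint (hα : 0 < α)
    (hA : ∀ v, (∀ q, B v q = 0) → α * ‖v‖ ^ 2 ≤ A v v) (hβ : 0 < β)
    (hB : ∀ q, β * ‖q‖ ≤ ‖B.flip q‖) (f : StrongDual ℝ V) (g : StrongDual ℝ Q) :
    ∃! up : V × Q, (∀ v, A up.1 v + B v up.2 = f v) ∧ ∀ q, B up.1 q = g q := by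
  obtain ⟨u, p, h₁, h₂⟩ := exists_saddlePoint hα hA hβ hB f g
  refine ⟨(u, p), ⟨h₁, h₂⟩, ?_⟩
  rintro ⟨u', p'⟩ ⟨h₁' : ∀ v, A u' v + B v p' = f v, h₂' : ∀ q, B u' q = g q⟩
  obtain ⟨hu, hp⟩ := saddlePoint_eq_zero (u := u' - u) (p := p' - p) hα hA hβ hB
    (fun v => by simp only [map_sub, sub_apply]; linarith [h₁ v, h₁' v])
    (fun q => by simp [h₂ q, h₂' q])
  exact Prod.ext (sub_eq_zero.1 hu) (sub_eq_zero.1 hp)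

end SaddlePoint

/-- Brezzi's theorem (existence and uniqueness): let `V, Q` be Hilbert spaces,
`a : V×V → ℝ`, `b : V×Q → ℝ` continuous bilinear forms, with `a` coercive on
the kernel `V₀ = {v : b(v,·) = 0}` and `b` satisfying the inf-sup (LBB)
condition. Then the saddle-point problem
`a(u,v) + b(v,p) = f(v) ∀v`, `b(u,q) = g(q) ∀q` has a unique solution. -/
theorem brezzi_existence_uniqueness
    (V Q : Type*)
    [NormedAddCommGroup V] [InnerProductSpace ℝ V] [CompleteSpace V]
    [NormedAddCommGroup Q] [InnerProductSpace ℝ Q] [CompleteSpace Q]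
    (a : V →ₗ[ℝ] V →ₗ[ℝ] ℝ) (b : V →ₗ[ℝ] Q →ₗ[ℝ] ℝ)
    (α₁ : ℝ) (ha_cont : ∀ u v : V, |a u v| ≤ α₁ * ‖u‖ * ‖v‖)
    (β₁ : ℝ) (hb_cont : ∀ (v : V) (q : Q), |b v q| ≤ β₁ * ‖v‖ * ‖q‖)
    (α₂ : ℝ) (hα₂ : 0 < α₂)
    (ha_coer : ∀ v : V, (∀ q : Q, b v q = 0) → α₂ * ‖v‖ ^ 2 ≤ a v v)
    (β₂ : ℝ) (hβ₂ : 0 < β₂)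
    (hb_infsup : ∀ q : Q, β₂ * ‖q‖ ≤ ⨆ v : V, b v q / ‖v‖)
    (f : V →L[ℝ] ℝ) (g : Q →L[ℝ] ℝ) :
    ∃! up : V × Q,
      (∀ v : V, a up.1 v + b v up.2 = f v) ∧ (∀ q : Q, b up.1 q = g q) := by
  let B := b.mkContinuous₂ β₁ hb_cont
  exact existsUnique_saddlePoint (A := a.mkContinuous₂ α₁ ha_cont) (B := B) hα₂ ha_coer hβ₂
    (fun q => (hb_infsup q).trans (B.flip q).iSup_apply_div_norm_le_opNorm) f g
end

section
/- Under the hypotheses of Brezzi's theorem, the solution (u,p) of the mixed problem satisfies the stability estimate ‖u‖_V + ‖p‖_Q ≤ C(‖f‖_{V*} + ‖g‖_{Q*}) with C depending only on the continuity, coercivity, and inf-sup constants. -/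
set_option maxHeartbeats 1000000

open InnerProductSpace RealInnerProductSpace

/-- Stability estimate in Brezzi's theorem: under the continuity, kernel
coercivity and inf-sup hypotheses, there is a constant `C` depending only on
the constants `α₁, β₁, α₂, β₂` such that any solution `(u,p)` of the mixed
problem satisfies `‖u‖_V + ‖p‖_Q ≤ C(‖f‖_{V*} + ‖g‖_{Q*})`. -/
theorem brezzi_stability_estimate
    (V Q : Type*)
    [NormedAddCommGroup V] [InnerProductSpace ℝ V] [CompleteSpace V]
    [NormedAddCommGroup Q] [InnerProductSpace ℝ Q] [CompleteSpace Q]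
    (a : V →ₗ[ℝ] V →ₗ[ℝ] ℝ) (b : V →ₗ[ℝ] Q →ₗ[ℝ] ℝ)
    (α₁ : ℝ) (ha_cont : ∀ u v : V, |a u v| ≤ α₁ * ‖u‖ * ‖v‖)
    (β₁ : ℝ) (hb_cont : ∀ (v : V) (q : Q), |b v q| ≤ β₁ * ‖v‖ * ‖q‖)
    (α₂ : ℝ) (hα₂ : 0 < α₂)
    (ha_coer : ∀ v : V, (∀ q : Q, b v q = 0) → α₂ * ‖v‖ ^ 2 ≤ a v v)
    (β₂ : ℝ) (hβ₂ : 0 < β₂)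
    (hb_infsup : ∀ q : Q, β₂ * ‖q‖ ≤ ⨆ v : V, b v q / ‖v‖) :
    ∃ C : ℝ, 0 < C ∧
      ∀ (f : V →L[ℝ] ℝ) (g : Q →L[ℝ] ℝ) (u : V) (p : Q),
        (∀ v : V, a u v + b v p = f v) → (∀ q : Q, b u q = g q) →
        ‖u‖ + ‖p‖ ≤ C * (‖f‖ + ‖g‖) := by
  set A : ℝ := max α₁ 0 with hAdef
  have hA : 0 ≤ A := le_max_right _ _
  have hA1 : α₁ ≤ A := le_max_left _ _
  have haA : ∀ u v : V, |a u v| ≤ A * ‖u‖ * ‖v‖ := by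
    intro u v
    refine (ha_cont u v).trans ?_
    have : α₁ * ‖u‖ * ‖v‖ ≤ A * ‖u‖ * ‖v‖ := by
      apply mul_le_mul_of_nonneg_right _ (norm_nonneg v)
      exact mul_le_mul_of_nonneg_right hA1 (norm_nonneg u)
    exact this
  set B1 : ℝ := max β₁ 0 with hB1def
  have hbB : ∀ (v : V) (q : Q), |b v q| ≤ B1 * ‖v‖ * ‖q‖ := by
    intro v q
    refine (hb_cont v q).trans ?_
    apply mul_le_mul_of_nonneg_right _ (norm_nonneg q)
    exact mul_le_mul_of_nonneg_right (le_max_left _ _) (norm_nonneg v)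
  -- the continuous bilinear form b, flipped
  have hbd : ∀ (q : Q) (v : V), ‖b.flip q v‖ ≤ B1 * ‖q‖ * ‖v‖ := by
    intro q v
    rw [LinearMap.flip_apply, Real.norm_eq_abs]
    calc |b v q| ≤ B1 * ‖v‖ * ‖q‖ := hbB v q
      _ = B1 * ‖q‖ * ‖v‖ := by ring
  set Bf : Q →L[ℝ] V →L[ℝ] ℝ := LinearMap.mkContinuous₂ b.flip B1 hbd with hBf
  -- the Riesz representation operator T : ⟪T q, v⟫ = b v q
  set T : Q →L[ℝ] V :=
    ((InnerProductSpace.toDual ℝ V).symm.toContinuousLinearEquiv.toContinuousLinearMap).comp Bf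
    with hTdef
  have hT : ∀ (q : Q) (v : V), ⟪T q, v⟫_ℝ = b v q := by
    intro q v
    simp [hTdef, hBf, InnerProductSpace.toDual_symm_apply]
  -- T is bounded below
  have hTlb : ∀ q : Q, β₂ * ‖q‖ ≤ ‖T q‖ := by
    intro q
    refine (hb_infsup q).trans (ciSup_le fun v => ?_)
    rcases eq_or_ne v 0 with rfl | hv
    · simp
    · rw [div_le_iff₀ (norm_pos_iff.mpr hv)]
      calc b v q = ⟪T q, v⟫_ℝ := (hT q v).symm
        _ ≤ ‖T q‖ * ‖v‖ := real_inner_le_norm _ _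
  -- the coercive bilinear form S q r = ⟪T q, T r⟫
  set Sl : Q →ₗ[ℝ] Q →ₗ[ℝ] ℝ := LinearMap.mk₂ ℝ (fun q r => ⟪T q, T r⟫_ℝ)
    (by intro x y z; simp [inner_add_left])
    (by intro c x y; simp [inner_smul_left])
    (by intro x y z; simp [inner_add_right])
    (by intro c x y; simp [inner_smul_right]) with hSl
  have hSbd : ∀ (q r : Q), ‖Sl q r‖ ≤ (‖T‖ * ‖T‖) * ‖q‖ * ‖r‖ := by
    intro q r
    have h1 : ‖Sl q r‖ ≤ ‖T q‖ * ‖T r‖ := by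
      rw [hSl]; simpa using abs_real_inner_le_norm (T q) (T r)
    refine h1.trans ?_
    calc ‖T q‖ * ‖T r‖ ≤ (‖T‖ * ‖q‖) * (‖T‖ * ‖r‖) :=
          mul_le_mul (T.le_opNorm q) (T.le_opNorm r) (norm_nonneg _) (by positivity)
      _ = (‖T‖ * ‖T‖) * ‖q‖ * ‖r‖ := by ring
  set S : Q →L[ℝ] Q →L[ℝ] ℝ := LinearMap.mkContinuous₂ Sl (‖T‖ * ‖T‖) hSbd with hS
  have hSapp : ∀ q r : Q, S q r = ⟪T q, T r⟫_ℝ := by intro q r; simp [hS, hSl]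
  have coercive : IsCoercive S := by
    refine ⟨β₂ * β₂, mul_pos hβ₂ hβ₂, fun q => ?_⟩
    rw [hSapp, real_inner_self_eq_norm_mul_norm]
    calc β₂ * β₂ * ‖q‖ * ‖q‖ = (β₂ * ‖q‖) * (β₂ * ‖q‖) := by ring
      _ ≤ ‖T q‖ * ‖T q‖ :=
        mul_le_mul (hTlb q) (hTlb q) (by positivity) (norm_nonneg _)
  -- the constant
  refine ⟨(β₂ * (β₂ + α₂ + A) + (A + α₂) * (β₂ + A)) / (α₂ * β₂ * β₂), ?_, ?_⟩
  · apply div_pos _ (by positivity)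
    have h1 : 0 < β₂ * (β₂ + α₂ + A) := by positivity
    have h2 : 0 ≤ (A + α₂) * (β₂ + A) := by positivity
    linarith
  intro f g u p hfv hgq
  -- solve for w with b w q = g q for all q, and β₂ ‖w‖ ≤ ‖g‖
  set g' : Q := (InnerProductSpace.toDual ℝ Q).symm g with hg'
  set z : Q := coercive.continuousLinearEquivOfBilin.symm g' with hz
  have hSz : ∀ q : Q, S z q = g q := by
    intro q
    have h1 : ⟪coercive.continuousLinearEquivOfBilin z, q⟫_ℝ = S z q :=
      coercive.continuousLinearEquivOfBilin_apply z q
    rw [hz] at h1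
    rw [ContinuousLinearEquiv.apply_symm_apply] at h1
    rw [← h1, hg', InnerProductSpace.toDual_symm_apply]
  set w : V := T z with hw
  have hbw : ∀ q : Q, b w q = g q := by
    intro q
    rw [← hT q w, hw, real_inner_comm, ← hSapp, hSz]
  have hwnorm : β₂ * ‖w‖ ≤ ‖g‖ := by
    have h1 : ‖w‖ * ‖w‖ = S z z := by
      rw [hSapp, real_inner_self_eq_norm_mul_norm, hw]
    have h2 : S z z = g z := hSz z
    have h3 : g z ≤ ‖g‖ * ‖z‖ := le_trans (le_abs_self _) (by
      rw [← Real.norm_eq_abs]; exact g.le_opNorm z)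
    have h4 : β₂ * ‖z‖ ≤ ‖T z‖ := hTlb z
    rcases eq_or_lt_of_le (norm_nonneg w) with hw0 | hw0
    · rw [← hw0, mul_zero]; positivity
    · have hTz : ‖T z‖ = ‖w‖ := by rw [hw]
      rw [hTz] at h4
      have : β₂ * (‖w‖ * ‖w‖) ≤ ‖g‖ * ‖w‖ := by
        calc β₂ * (‖w‖ * ‖w‖) = β₂ * S z z := by rw [h1]
          _ = β₂ * g z := by rw [h2]
          _ ≤ β₂ * (‖g‖ * ‖z‖) := by
              apply mul_le_mul_of_nonneg_left h3 hβ₂.le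
          _ = ‖g‖ * (β₂ * ‖z‖) := by ring
          _ ≤ ‖g‖ * ‖w‖ := mul_le_mul_of_nonneg_left h4 (norm_nonneg g)
      nlinarith
  clear_value w z g'
  clear hw hSz hz z coercive hSapp hS S hSbd hSl Sl hg' g' hTlb hT hTdef T hBf Bf hbd hbB hB1def
  -- coercivity estimate for u - w
  have hker : ∀ q : Q, b (u - w) q = 0 := by
    intro q
    simp [hbw, hgq]
  have hbvp : b (u - w) p = 0 := hker p
  have hcoer : α₂ * ‖u - w‖ ≤ ‖f‖ + A * ‖w‖ := by
    have h0 : α₂ * ‖u - w‖ ^ 2 ≤ a (u - w) (u - w) := ha_coer _ hker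
    have h1 : a (u - w) (u - w) = f (u - w) - a w (u - w) := by
      have := hfv (u - w)
      rw [hbvp, add_zero] at this
      have hsub : a (u - w) (u - w) = a u (u - w) - a w (u - w) := by
        simp
      rw [hsub, this]
    have h2 : f (u - w) ≤ ‖f‖ * ‖u - w‖ :=
      le_trans (le_abs_self _) (by rw [← Real.norm_eq_abs]; exact f.le_opNorm _)
    have h3 : -a w (u - w) ≤ A * ‖w‖ * ‖u - w‖ :=
      le_trans (neg_le_abs _) (haA w (u - w))
    have h4 : α₂ * ‖u - w‖ ^ 2 ≤ (‖f‖ + A * ‖w‖) * ‖u - w‖ := by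
      rw [h1] at h0
      nlinarith
    rcases eq_or_lt_of_le (norm_nonneg (u - w)) with h5 | h5
    · rw [← h5, mul_zero]; positivity
    · nlinarith
  have hu : α₂ * ‖u‖ ≤ ‖f‖ + (A + α₂) * ‖w‖ := by
    have : ‖u‖ ≤ ‖u - w‖ + ‖w‖ := by simpa using norm_add_le (u - w) w
    nlinarith
  -- estimate for p from inf-sup
  have hp : β₂ * ‖p‖ ≤ ‖f‖ + A * ‖u‖ := by
    refine (hb_infsup p).trans (ciSup_le fun v => ?_)
    rcases eq_or_ne v 0 with rfl | hv
    · simp; positivity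
    · rw [div_le_iff₀ (norm_pos_iff.mpr hv)]
      have h1 : b v p = f v - a u v := by
        have := hfv v; linarith
      have h2 : f v ≤ ‖f‖ * ‖v‖ :=
        le_trans (le_abs_self _) (by rw [← Real.norm_eq_abs]; exact f.le_opNorm _)
      have h3 : -a u v ≤ A * ‖u‖ * ‖v‖ := le_trans (neg_le_abs _) (haA u v)
      rw [h1]
      calc f v - a u v ≤ ‖f‖ * ‖v‖ + A * ‖u‖ * ‖v‖ := by linarith
        _ = (‖f‖ + A * ‖u‖) * ‖v‖ := by ring
  -- combine
  have hfn : 0 ≤ ‖f‖ := norm_nonneg _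
  have hgn : 0 ≤ ‖g‖ := norm_nonneg _
  have key : α₂ * β₂ * β₂ * (‖u‖ + ‖p‖) ≤
      (β₂ * (β₂ + α₂ + A) + (A + α₂) * (β₂ + A)) * (‖f‖ + ‖g‖) := by
    nlinarith [mul_le_mul_of_nonneg_left hu (by positivity : (0:ℝ) ≤ β₂ * β₂),
      mul_le_mul_of_nonneg_left hu (by positivity : (0:ℝ) ≤ A * β₂),
      mul_le_mul_of_nonneg_left hp (by positivity : (0:ℝ) ≤ α₂ * β₂),
      mul_le_mul_of_nonneg_left hwnorm (by positivity : (0:ℝ) ≤ (A + α₂) * β₂),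
      mul_le_mul_of_nonneg_left hwnorm (by positivity : (0:ℝ) ≤ A * (A + α₂)),
      mul_nonneg (by positivity : (0:ℝ) ≤ (A + α₂) * (β₂ + A)) hfn,
      mul_nonneg (by positivity : (0:ℝ) ≤ β₂ * (β₂ + α₂ + A)) hgn]
  rw [div_mul_eq_mul_div, le_div_iff₀ (by positivity)]
  nlinarith [key]
end
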